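/- For all integers n ≥ 1 and m ≥ 2, the number of fuzzy bitopological spaces on an n-element set X with membership values in an m-element chain M in which both fuzzy topologies have exactly 3 open sets is (τᵢ, τⱼ)_F(n, m, 3) = (m^(2n) − 3·m^n + 2)/2. -/

import Mathlib

/-- A fuzzy topology on `Fin n` with membership values in the `m`-element chain `Fin m`:
a collection of fuzzy sets (functions `Fin n → Fin m`) containing the constant function
with the least value, the constant function with the greatest value, and closed under
pointwise (binary) supremum and infimum. -/
def IsFuzzyTopology {n m : ℕ} (hm : m ≠ 0) (τ : Finset (Fin n → Fin m)) : Prop :=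
  (fun _ => (⟨0, Nat.pos_of_ne_zero hm⟩ : Fin m)) ∈ τ ∧
  (fun _ => (⟨m - 1, by omega⟩ : Fin m)) ∈ τ ∧
  (∀ f ∈ τ, ∀ g ∈ τ, f ⊔ g ∈ τ) ∧
  (∀ f ∈ τ, ∀ g ∈ τ, f ⊓ g ∈ τ)

/-- `tauF n m k hm` is the number of fuzzy topologies on an `n`-element set with values in an
`m`-element chain having exactly `k` open sets. -/
noncomputable def tauF (n m k : ℕ) (hm : m ≠ 0) : ℕ :=
  Nat.card {τ : Finset (Fin n → Fin m) // IsFuzzyTopology hm τ ∧ τ.card = k}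

/-- `biTauF n m k hm` is the number of fuzzy bitopological spaces (unordered pairs of fuzzy
topologies, allowing equal ones) on an `n`-element set with values in an `m`-element chain in
which both topologies have exactly `k` open sets. -/
noncomputable def biTauF (n m k : ℕ) (hm : m ≠ 0) : ℕ :=
  Nat.card (Sym2 {τ : Finset (Fin n → Fin m) // IsFuzzyTopology hm τ ∧ τ.card = k})

/-!
A fuzzy topology with exactly three open sets must contain the two constant fuzzy sets `0` and
`1`, so it is `{0, f, 1}` for some `f ∉ {0, 1}`; conversely every such family is a chain, hence
closed under `⊔` and `⊓`. Thus `τ_F(n, m, 3) = m ^ n - 2`, and the unordered pairs (with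
repetition) of such topologies number `C(m ^ n - 1, 2) = (m ^ n - 1) (m ^ n - 2) / 2`.
-/

namespace Finset

variable {α : Type*} [DecidableEq α] {a b : α}

theorem card_insert_pair_eq_three {x : α} (hab : a ≠ b) (hxa : x ≠ a) (hxb : x ≠ b) :
    ({a, x, b} : Finset α).card = 3 := by
  rw [card_insert_of_notMem (by simp [hab, hxa.symm]), card_pair hxb]

theorem exists_eq_insert_pair_of_card_eq_three {s : Finset α} (hab : a ≠ b) (ha : a ∈ s)
    (hb : b ∈ s) (hs : s.card = 3) : ∃ x, x ≠ a ∧ x ≠ b ∧ s = {a, x, b} := by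
  have hab_sub : {a, b} ⊆ s := insert_subset ha (singleton_subset_iff.mpr hb)
  obtain ⟨x, hx⟩ := card_eq_one.mp <| by
    rw [card_sdiff_of_subset hab_sub, hs, card_pair hab]
  have hxs : x ∈ s \ {a, b} := hx ▸ mem_singleton_self x
  simp only [mem_sdiff, mem_insert, mem_singleton, not_or] at hxs
  obtain ⟨hxs, hxa, hxb⟩ := hxs
  refine ⟨x, hxa, hxb, (eq_of_subset_of_card_le ?_ ?_).symm⟩
  · simp [insert_subset_iff, ha, hb, hxs]
  · rw [hs, card_insert_pair_eq_three hab hxa hxb]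

theorem insert_pair_injective {x y : α} (hxa : x ≠ a) (hxb : x ≠ b)
    (h : ({a, x, b} : Finset α) = {a, y, b}) : x = y := by
  have hx : x ∈ ({a, y, b} : Finset α) := h ▸ by simp
  simpa [hxa, hxb] using hx

noncomputable def cardThreeSupersetsEquiv (hab : a ≠ b) :
    {x : α // x ≠ a ∧ x ≠ b} ≃ {s : Finset α // a ∈ s ∧ b ∈ s ∧ s.card = 3} :=
  Equiv.ofBijective
    (fun x => ⟨{a, x.1, b}, by simp, by simp, card_insert_pair_eq_three hab x.2.1 x.2.2⟩)
    ⟨fun x y h => Subtype.ext <| insert_pair_injective x.2.1 x.2.2 (congrArg Subtype.val h),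
      fun s => by
        obtain ⟨x, hxa, hxb, hs⟩ :=
          exists_eq_insert_pair_of_card_eq_three hab s.2.1 s.2.2.1 s.2.2.2
        exact ⟨⟨x, hxa, hxb⟩, Subtype.ext hs.symm⟩⟩

theorem natCard_cardThreeSupersets [Fintype α] (hab : a ≠ b) :
    Nat.card {s : Finset α // a ∈ s ∧ b ∈ s ∧ s.card = 3} = Fintype.card α - 2 := by
  rw [← Nat.card_congr (cardThreeSupersetsEquiv hab), Nat.card_eq_fintype_card,
    Fintype.card_subtype]
  have : univ.filter (fun x : α => x ≠ a ∧ x ≠ b) = {a, b}ᶜ := by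
    ext x; simp
  rw [this, card_compl, card_pair hab]

end Finset

section Lattice

variable {α : Type*} [Lattice α] {s : Set α} {a b : α}

theorem IsChain.sup_mem (hs : IsChain (· ≤ ·) s) (ha : a ∈ s) (hb : b ∈ s) : a ⊔ b ∈ s := by
  rcases hs.total ha hb with h | h
  · rwa [sup_eq_right.mpr h]
  · rwa [sup_eq_left.mpr h]

theorem IsChain.inf_mem (hs : IsChain (· ≤ ·) s) (ha : a ∈ s) (hb : b ∈ s) : a ⊓ b ∈ s := by
  rcases hs.total ha hb with h | h
  · rwa [inf_eq_left.mpr h]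
  · rwa [inf_eq_right.mpr h]

theorem isChain_insert_pair_of_isBot_of_isTop (ha : IsBot a) (hb : IsTop b) (x : α) :
    IsChain (· ≤ ·) ({a, x, b} : Set α) :=
  (IsChain.singleton.insert fun _ hy _ => .inl (Set.mem_singleton_iff.mp hy ▸ hb x)).insert
    fun y _ _ => .inl (ha y)

end Lattice

section FuzzyTopology

variable {n m : ℕ}

def fuzzyEmpty (hm : m ≠ 0) : Fin n → Fin m := fun _ => ⟨0, Nat.pos_of_ne_zero hm⟩

def fuzzyUniv (hm : m ≠ 0) : Fin n → Fin m := fun _ => ⟨m - 1, by omega⟩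

theorem isBot_fuzzyEmpty (hm : m ≠ 0) : IsBot (fuzzyEmpty (n := n) hm) :=
  fun _ _ => Nat.zero_le _

theorem isTop_fuzzyUniv (hm : m ≠ 0) : IsTop (fuzzyUniv (n := n) hm) :=
  fun f i => Nat.le_sub_one_of_lt (f i).isLt

theorem fuzzyEmpty_ne_fuzzyUniv (hn : n ≠ 0) (hm : 2 ≤ m) :
    fuzzyEmpty (n := n) (m := m) (by omega) ≠ fuzzyUniv (by omega) := fun h => by
  have := congrArg Fin.val (congrFun h ⟨0, Nat.pos_of_ne_zero hn⟩)
  simp only [fuzzyEmpty, fuzzyUniv] at this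
  omega

theorem IsFuzzyTopology.of_isChain {hm : m ≠ 0} {τ : Finset (Fin n → Fin m)}
    (hempty : fuzzyEmpty hm ∈ τ) (huniv : fuzzyUniv hm ∈ τ)
    (hτ : IsChain (· ≤ ·) (τ : Set (Fin n → Fin m))) :
    IsFuzzyTopology hm τ :=
  ⟨hempty, huniv, fun _ hf _ hg => hτ.sup_mem hf hg, fun _ hf _ hg => hτ.inf_mem hf hg⟩

-- A three-element family containing both constant fuzzy sets is a chain, hence a topology.
theorem isFuzzyTopology_and_card_eq_three_iff (hn : n ≠ 0) (hm : 2 ≤ m)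
    {τ : Finset (Fin n → Fin m)} :
    IsFuzzyTopology (by omega) τ ∧ τ.card = 3 ↔
      fuzzyEmpty (by omega) ∈ τ ∧ fuzzyUniv (by omega) ∈ τ ∧ τ.card = 3 := by
  refine ⟨fun ⟨hτ, hcard⟩ => ⟨hτ.1, hτ.2.1, hcard⟩, fun ⟨hempty, huniv, hcard⟩ => ⟨?_, hcard⟩⟩
  obtain ⟨f, -, -, rfl⟩ := Finset.exists_eq_insert_pair_of_card_eq_three
    (fuzzyEmpty_ne_fuzzyUniv hn hm) hempty huniv hcard
  refine .of_isChain hempty huniv ?_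
  simpa using isChain_insert_pair_of_isBot_of_isTop (isBot_fuzzyEmpty _) (isTop_fuzzyUniv _) f

theorem tauF_three (hn : n ≠ 0) (hm : 2 ≤ m) : tauF n m 3 (by omega) = m ^ n - 2 := by
  rw [tauF, Nat.card_congr (Equiv.subtypeEquivRight fun _ =>
      isFuzzyTopology_and_card_eq_three_iff hn hm),
    Finset.natCard_cardThreeSupersets (fuzzyEmpty_ne_fuzzyUniv hn hm), Fintype.card_fun,
    Fintype.card_fin, Fintype.card_fin]

theorem biTauF_eq_choose (k : ℕ) (hm : m ≠ 0) : biTauF n m k hm = (tauF n m k hm + 1).choose 2 :=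
  Sym2.natCard _

end FuzzyTopology

theorem Int.natCast_choose_two_pred {M : ℕ} (hM : 1 ≤ M) :
    (((M - 1).choose 2 : ℕ) : ℤ) = ((M : ℤ) ^ 2 - 3 * M + 2) / 2 := by
  obtain ⟨K, rfl⟩ := Nat.exists_eq_add_of_le' hM
  rw [Nat.add_sub_cancel, Nat.choose_two_right, Int.natCast_div]
  rcases K with _ | K
  · rfl
  · push_cast [Nat.add_sub_cancel]
    ring_nf

theorem biTauF_three_open_sets (n m : ℕ) (hn : 1 ≤ n) (hm : 2 ≤ m) :
    (biTauF n m 3 (by omega) : ℤ) =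
      ((m : ℤ) ^ (2 * n) - 3 * (m : ℤ) ^ n + 2) / 2 := by
  have hpow : 2 ≤ m ^ n := hm.trans (Nat.le_self_pow (by omega) m)
  rw [biTauF_eq_choose, tauF_three (by omega) hm, show m ^ n - 2 + 1 = m ^ n - 1 by omega,
    Int.natCast_choose_two_pred (by omega), pow_mul', Nat.cast_pow]
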